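/- Let C be a skew monoidal category admitting the right normalization C^I. Then the category of monoids in the skew monoidal category C^I is equivalent (indeed isomorphic) to the category of monoids in C, via the forgetful functor U : C^I → C. -/

import Mathlib

open CategoryTheory

universe w v u v' u'

/-- The data of a skew monoidal structure on a category: tensor product (on objects
and morphisms), unit object, and (not necessarily invertible) associator, left unitor
and right unitor. -/
structure SkewMonoidalData (C : Type u) [Category.{v} C] where
  t : C → C → C
  tH : ∀ {X X' Y Y' : C}, (X ⟶ X') → (Y ⟶ Y') → (t X Y ⟶ t X' Y')
  I : C
  a : ∀ X Y Z : C, t (t X Y) Z ⟶ t X (t Y Z)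
  l : ∀ X : C, t I X ⟶ X
  r : ∀ X : C, X ⟶ t X I

namespace SkewMonoidalData

variable {C : Type u} [Category.{v} C]

/-- The tensor product is functorial in each variable (a bifunctor). -/
class Functorial (S : SkewMonoidalData C) : Prop where
  tH_id : ∀ X Y : C, S.tH (𝟙 X) (𝟙 Y) = 𝟙 (S.t X Y)
  tH_comp : ∀ {X X' X'' Y Y' Y'' : C} (f : X ⟶ X') (f' : X' ⟶ X'') (g : Y ⟶ Y')
    (g' : Y' ⟶ Y''), S.tH (f ≫ f') (g ≫ g') = S.tH f g ≫ S.tH f' g'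

/-- The naturality conditions and five coherence axioms of a skew monoidal category. -/
structure IsSkewMonoidal (S : SkewMonoidalData C) : Prop where
  a_nat : ∀ {X X' Y Y' Z Z' : C} (f : X ⟶ X') (g : Y ⟶ Y') (h : Z ⟶ Z'),
    S.tH (S.tH f g) h ≫ S.a X' Y' Z' = S.a X Y Z ≫ S.tH f (S.tH g h)
  l_nat : ∀ {X Y : C} (f : X ⟶ Y), S.tH (𝟙 S.I) f ≫ S.l Y = S.l X ≫ f
  r_nat : ∀ {X Y : C} (f : X ⟶ Y), f ≫ S.r Y = S.r X ≫ S.tH f (𝟙 S.I)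
  pentagon : ∀ W X Y Z : C,
    S.tH (S.a W X Y) (𝟙 Z) ≫ S.a W (S.t X Y) Z ≫ S.tH (𝟙 W) (S.a X Y Z)
      = S.a (S.t W X) Y Z ≫ S.a W X (S.t Y Z)
  ax2 : ∀ X Y : C, S.tH (S.r X) (𝟙 Y) ≫ S.a X S.I Y ≫ S.tH (𝟙 X) (S.l Y) = 𝟙 (S.t X Y)
  ax3 : ∀ X Y : C, S.a S.I X Y ≫ S.l (S.t X Y) = S.tH (S.l X) (𝟙 Y)
  ax4 : ∀ X Y : C, S.r (S.t X Y) ≫ S.a X Y S.I = S.tH (𝟙 X) (S.r Y)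
  ax5 : S.r S.I ≫ S.l S.I = 𝟙 S.I

end SkewMonoidalData

/-- A right `I`-module in a skew monoidal category: an algebra for the monad
`X ↦ X ⊗ I` with multiplication `(1 ⊗ λ) ∘ α` and unit `ρ`. -/
structure IMod {C : Type u} [Category.{v} C] (S : SkewMonoidalData C) where
  X : C
  act : S.t X S.I ⟶ X
  massoc : S.tH act (𝟙 S.I) ≫ act = S.a X S.I S.I ≫ S.tH (𝟙 X) (S.l S.I) ≫ act
  munit : S.r X ≫ act = 𝟙 X

/-- A morphism of right `I`-modules. -/
@[ext]
structure IModHom {C : Type u} [Category.{v} C] {S : SkewMonoidalData C}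
    (M N : IMod S) where
  f : M.X ⟶ N.X
  comm : S.tH f (𝟙 S.I) ≫ N.act = M.act ≫ f

/-- The category `C^I` of right `I`-modules. -/
instance IMod.category {C : Type u} [Category.{v} C] (S : SkewMonoidalData C)
    [S.Functorial] : Category (IMod S) where
  Hom := IModHom
  id M := ⟨𝟙 M.X, by rw [SkewMonoidalData.Functorial.tH_id]; simp⟩
  comp {M N P} φ ψ := ⟨φ.f ≫ ψ.f, by
    have h : S.tH (φ.f ≫ ψ.f) (𝟙 S.I) = S.tH φ.f (𝟙 S.I) ≫ S.tH ψ.f (𝟙 S.I) := by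
      rw [← SkewMonoidalData.Functorial.tH_comp]; simp
    rw [h, Category.assoc, ψ.comm, ← Category.assoc, φ.comm, Category.assoc]⟩
  id_comp φ := by apply IModHom.ext; simp
  comp_id φ := by apply IModHom.ext; simp
  assoc φ ψ χ := by apply IModHom.ext; simp

@[simp] theorem IMod.id_f {C : Type u} [Category.{v} C] {S : SkewMonoidalData C}
    [S.Functorial] (M : IMod S) : (𝟙 M : M ⟶ M).f = 𝟙 M.X := rfl

@[simp] theorem IMod.comp_f {C : Type u} [Category.{v} C] {S : SkewMonoidalData C}
    [S.Functorial] {M N P : IMod S} (φ : M ⟶ N) (ψ : N ⟶ P) :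
    (φ ≫ ψ).f = φ.f ≫ ψ.f := rfl

/-- The forgetful functor `C^I ⥤ C`. -/
def forgetIMod {C : Type u} [Category.{v} C] (S : SkewMonoidalData C) [S.Functorial] :
    IMod S ⥤ C where
  obj M := M.X
  map φ := φ.f

/-- The unit `I`, with action `λ`, as a right `I`-module. -/
def unitMod {C : Type u} [Category.{v} C] (S : SkewMonoidalData C)
    (hS : S.IsSkewMonoidal) : IMod S where
  X := S.I
  act := S.l S.I
  massoc := by
    rw [hS.l_nat (S.l S.I)]
    rw [← Category.assoc, ← hS.ax3, Category.assoc]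
  munit := hS.ax5

section Wedge

variable {C : Type u} [Category.{v} C] (S : SkewMonoidalData C)

/-- The first leg `x ⊗ 1` of the reflexive pair whose coequalizer is `M ∧ N`. -/
def coeqPairL (M N : IMod S) : S.t (S.t M.X S.I) N.X ⟶ S.t M.X N.X :=
  S.tH M.act (𝟙 N.X)

/-- The second leg `(1 ⊗ λ) ∘ α` of the reflexive pair whose coequalizer is `M ∧ N`. -/
def coeqPairR (M N : IMod S) : S.t (S.t M.X S.I) N.X ⟶ S.t M.X N.X :=
  S.a M.X S.I N.X ≫ S.tH (𝟙 M.X) (S.l N.X)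

/-- `q : M.X ⊗ N.X ⟶ W` is a coequalizer of the reflexive pair. -/
def IsWedge (M N : IMod S) {W : C} (q : S.t M.X N.X ⟶ W) : Prop :=
  (coeqPairL S M N ≫ q = coeqPairR S M N ≫ q) ∧
  ∀ {Z : C} (h : S.t M.X N.X ⟶ Z), coeqPairL S M N ≫ h = coeqPairR S M N ≫ h →
    ∃! h' : W ⟶ Z, q ≫ h' = h

/-- The coequalizer `q` remains a coequalizer after tensoring on the right with any
object `P`. -/
def IsWedgeTens (M N : IMod S) {W : C} (q : S.t M.X N.X ⟶ W) : Prop :=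
  ∀ P : C,
    (S.tH (coeqPairL S M N) (𝟙 P) ≫ S.tH q (𝟙 P)
      = S.tH (coeqPairR S M N) (𝟙 P) ≫ S.tH q (𝟙 P)) ∧
    ∀ {Z : C} (h : S.t (S.t M.X N.X) P ⟶ Z),
      S.tH (coeqPairL S M N) (𝟙 P) ≫ h = S.tH (coeqPairR S M N) (𝟙 P) ≫ h →
        ∃! h' : S.t W P ⟶ Z, S.tH q (𝟙 P) ≫ h' = h

end Wedge

/-- A monoid in a skew monoidal category: `d` with multiplication `mu` and unit `e`
satisfying associativity and the two unit laws. -/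
def SkewMonoidalData.IsMonoidIn {C : Type u} [Category.{v} C] (S : SkewMonoidalData C)
    (d : C) (mu : S.t d d ⟶ d) (e : S.I ⟶ d) : Prop :=
  S.tH mu (𝟙 d) ≫ mu = S.a d d d ≫ S.tH (𝟙 d) mu ≫ mu ∧
  S.tH e (𝟙 d) ≫ mu = S.l d ∧
  S.r d ≫ S.tH (𝟙 d) e ≫ mu = 𝟙 d

/-! The forgetful functor `U : C^I ⥤ C` is normal lax monoidal, with structure maps the
coequalizers `q : M ⊗ N ⟶ M ∧ N`, so it sends monoids to monoids; as `U` is faithful and `q`,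
`q ⊗ 1` are epi, it also reflects the monoid laws. A monoid `(X, μ, η)` in `C` is an `I`-module
under `μ ∘ (1 ⊗ η)`, and associativity makes `μ` coequalize the pair presenting `X ∧ X`, so `μ`
descends to a multiplication in `C^I`. Conversely the right unit law forces the action of any
monoid in `C^I` to be `μ ∘ (1 ⊗ η)`: this makes the lift unique, and makes every monoid morphism
in `C` a morphism of `I`-modules. -/

-- Lets rewriting identify `(unitMod S hS).X` with `S.I` inside dependent types.
attribute [reducible] unitMod

namespace SkewMonoidalData

def rightAct {C : Type u} [Category.{v} C] (S : SkewMonoidalData C) {X : C}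
    (μ : S.t X X ⟶ X) (η : S.I ⟶ X) : S.t X S.I ⟶ X :=
  S.tH (𝟙 X) η ≫ μ

section Functorial

variable {C : Type u} [Category.{v} C] {S : SkewMonoidalData C} [S.Functorial]

theorem tH_id (X Y : C) : S.tH (𝟙 X) (𝟙 Y) = 𝟙 (S.t X Y) :=
  Functorial.tH_id X Y

theorem tH_comp_left {X X' X'' : C} (f : X ⟶ X') (f' : X' ⟶ X'') (Y : C) :
    S.tH (f ≫ f') (𝟙 Y) = S.tH f (𝟙 Y) ≫ S.tH f' (𝟙 Y) := by
  simpa using Functorial.tH_comp (S := S) f f' (𝟙 Y) (𝟙 Y)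

theorem tH_comp_right (X : C) {Y Y' Y'' : C} (g : Y ⟶ Y') (g' : Y' ⟶ Y'') :
    S.tH (𝟙 X) (g ≫ g') = S.tH (𝟙 X) g ≫ S.tH (𝟙 X) g' := by
  simpa using Functorial.tH_comp (S := S) (𝟙 X) (𝟙 X) g g'

theorem tH_left_comp_tH_right {X X' Y Y' : C} (f : X ⟶ X') (g : Y ⟶ Y') :
    S.tH f (𝟙 Y) ≫ S.tH (𝟙 X') g = S.tH f g := by
  simpa using (Functorial.tH_comp (S := S) f (𝟙 X') (𝟙 Y) g).symm

theorem tH_right_comp_tH_left {X X' Y Y' : C} (f : X ⟶ X') (g : Y ⟶ Y') :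
    S.tH (𝟙 X) g ≫ S.tH f (𝟙 Y') = S.tH f g := by
  simpa using (Functorial.tH_comp (S := S) (𝟙 X) f g (𝟙 Y')).symm

theorem tH_comp_rightAct_of_hom {X Y : C} {μX : S.t X X ⟶ X} {ηX : S.I ⟶ X}
    {μY : S.t Y Y ⟶ Y} {ηY : S.I ⟶ Y} (g : X ⟶ Y) (hμ : S.tH g g ≫ μY = μX ≫ g)
    (hη : ηX ≫ g = ηY) :
    S.tH g (𝟙 S.I) ≫ S.rightAct μY ηY = S.rightAct μX ηX ≫ g := by
  calc S.tH g (𝟙 S.I) ≫ S.tH (𝟙 Y) ηY ≫ μY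
      = S.tH (𝟙 X ≫ g) (ηX ≫ g) ≫ μY := by
        rw [← Category.assoc, tH_left_comp_tH_right, Category.id_comp, hη]
    _ = (S.tH (𝟙 X) ηX ≫ μX) ≫ g := by
        rw [Functorial.tH_comp, Category.assoc, hμ, Category.assoc]

end Functorial

structure LaxMonoidal {C : Type u} [Category.{v} C] {D : Type u'} [Category.{v'} D]
    (T : SkewMonoidalData D) (S : SkewMonoidalData C) (F : D ⥤ C) where
  φ : ∀ M N : D, S.t (F.obj M) (F.obj N) ⟶ F.obj (T.t M N)
  φ₀ : S.I ⟶ F.obj T.I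
  φ_natural : ∀ {M M' N N' : D} (f : M ⟶ M') (g : N ⟶ N'),
    φ M N ≫ F.map (T.tH f g) = S.tH (F.map f) (F.map g) ≫ φ M' N'
  associativity : ∀ M N P : D,
    S.tH (φ M N) (𝟙 (F.obj P)) ≫ φ (T.t M N) P ≫ F.map (T.a M N P)
      = S.a (F.obj M) (F.obj N) (F.obj P) ≫ S.tH (𝟙 (F.obj M)) (φ N P) ≫ φ M (T.t N P)
  left_unitality : ∀ M : D, S.tH φ₀ (𝟙 (F.obj M)) ≫ φ T.I M ≫ F.map (T.l M) = S.l (F.obj M)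
  right_unitality : ∀ M : D, F.map (T.r M) = S.r (F.obj M) ≫ S.tH (𝟙 (F.obj M)) φ₀ ≫ φ M T.I

namespace LaxMonoidal

variable {C : Type u} [Category.{v} C] {D : Type u'} [Category.{v'} D]
  {T : SkewMonoidalData D} {S : SkewMonoidalData C} {F : D ⥤ C} (Φ : T.LaxMonoidal S F)

theorem φ_natural_left {M M' : D} (f : M ⟶ M') (N : D) :
    Φ.φ M N ≫ F.map (T.tH f (𝟙 N)) = S.tH (F.map f) (𝟙 (F.obj N)) ≫ Φ.φ M' N := by
  simpa using Φ.φ_natural f (𝟙 N)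

theorem φ_natural_right (M : D) {N N' : D} (g : N ⟶ N') :
    Φ.φ M N ≫ F.map (T.tH (𝟙 M) g) = S.tH (𝟙 (F.obj M)) (F.map g) ≫ Φ.φ M N' := by
  simpa using Φ.φ_natural (𝟙 M) g

variable [S.Functorial] {m : D} (μ : T.t m m ⟶ m) (η : T.I ⟶ m)

theorem map_tH_mul_comp_mul :
    (S.tH (Φ.φ m m) (𝟙 (F.obj m)) ≫ Φ.φ (T.t m m) m) ≫ F.map (T.tH μ (𝟙 m) ≫ μ)
      = S.tH (Φ.φ m m ≫ F.map μ) (𝟙 (F.obj m)) ≫ Φ.φ m m ≫ F.map μ := by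
  rw [F.map_comp, Category.assoc, ← Category.assoc (Φ.φ _ _), φ_natural_left, tH_comp_left]
  simp only [Category.assoc]

theorem map_assoc_comp_mul :
    (S.tH (Φ.φ m m) (𝟙 (F.obj m)) ≫ Φ.φ (T.t m m) m) ≫ F.map (T.a m m m ≫ T.tH (𝟙 m) μ ≫ μ)
      = S.a _ _ _ ≫ S.tH (𝟙 (F.obj m)) (Φ.φ m m ≫ F.map μ) ≫ Φ.φ m m ≫ F.map μ := by
  simp only [F.map_comp, Category.assoc]
  rw [← Category.assoc (Φ.φ _ m), ← Category.assoc (S.tH _ _), Φ.associativity]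
  rw [Category.assoc, Category.assoc, ← Category.assoc (Φ.φ m _), φ_natural_right,
    tH_comp_right]
  simp only [Category.assoc]

theorem map_tH_unit_comp_mul :
    (S.tH Φ.φ₀ (𝟙 (F.obj m)) ≫ Φ.φ T.I m) ≫ F.map (T.tH η (𝟙 m) ≫ μ)
      = S.tH (Φ.φ₀ ≫ F.map η) (𝟙 (F.obj m)) ≫ Φ.φ m m ≫ F.map μ := by
  rw [F.map_comp, Category.assoc, ← Category.assoc (Φ.φ _ _), φ_natural_left, tH_comp_left]
  simp only [Category.assoc]

theorem map_r_comp_mul :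
    F.map (T.r m ≫ T.tH (𝟙 m) η ≫ μ)
      = S.r (F.obj m) ≫ S.tH (𝟙 (F.obj m)) (Φ.φ₀ ≫ F.map η) ≫ Φ.φ m m ≫ F.map μ := by
  rw [F.map_comp, F.map_comp, Φ.right_unitality, tH_comp_right]
  simp only [Category.assoc]
  rw [← Category.assoc (Φ.φ m T.I), φ_natural_right]
  simp only [Category.assoc]

theorem isMonoidIn_map (h : T.IsMonoidIn m μ η) :
    S.IsMonoidIn (F.obj m) (Φ.φ m m ≫ F.map μ) (Φ.φ₀ ≫ F.map η) := by
  obtain ⟨h_assoc, h_left, h_right⟩ := h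
  refine ⟨?_, ?_, ?_⟩
  · rw [← Φ.map_tH_mul_comp_mul, h_assoc, Φ.map_assoc_comp_mul]
  · rw [← Φ.map_tH_unit_comp_mul, h_left, Category.assoc, Φ.left_unitality]
  · rw [← Φ.map_r_comp_mul, h_right, F.map_id]

theorem isMonoidIn_of_map [F.Faithful]
    [hφ : Epi (S.tH (Φ.φ m m) (𝟙 (F.obj m)) ≫ Φ.φ (T.t m m) m)]
    [hφ₀ : Epi (S.tH Φ.φ₀ (𝟙 (F.obj m)) ≫ Φ.φ T.I m)]
    (h : S.IsMonoidIn (F.obj m) (Φ.φ m m ≫ F.map μ) (Φ.φ₀ ≫ F.map η)) :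
    T.IsMonoidIn m μ η := by
  obtain ⟨h_assoc, h_left, h_right⟩ := h
  refine ⟨F.map_injective ?_, F.map_injective ?_, F.map_injective ?_⟩
  · rw [← cancel_epi (S.tH (Φ.φ m m) (𝟙 (F.obj m)) ≫ Φ.φ (T.t m m) m),
      Φ.map_tH_mul_comp_mul, h_assoc, Φ.map_assoc_comp_mul]
  · rw [← cancel_epi (S.tH Φ.φ₀ (𝟙 (F.obj m)) ≫ Φ.φ T.I m), Φ.map_tH_unit_comp_mul, h_left,
      Category.assoc, Φ.left_unitality]
  · rw [Φ.map_r_comp_mul, h_right, F.map_id]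

end LaxMonoidal

namespace IsMonoidIn

variable {C : Type u} [Category.{v} C] {S : SkewMonoidalData C} [S.Functorial] {X : C}
  {μ : S.t X X ⟶ X} {η : S.I ⟶ X}

theorem tH_comp_mul_assoc (h : S.IsMonoidIn X μ η) (hS : S.IsSkewMonoidal) {Y Z : C}
    (f : Y ⟶ X) (g : Z ⟶ X) :
    S.tH (S.tH (𝟙 X) f ≫ μ) g ≫ μ = S.a X Y Z ≫ S.tH (𝟙 X) (S.tH f g ≫ μ) ≫ μ := by
  calc S.tH (S.tH (𝟙 X) f ≫ μ) g ≫ μ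
      = S.tH (S.tH (𝟙 X) f) g ≫ S.tH μ (𝟙 X) ≫ μ := by
        rw [← Category.assoc, ← Functorial.tH_comp, Category.comp_id]
    _ = (S.tH (S.tH (𝟙 X) f) g ≫ S.a X X X) ≫ S.tH (𝟙 X) μ ≫ μ := by
        rw [h.1, Category.assoc]
    _ = S.a X Y Z ≫ S.tH (𝟙 X) (S.tH f g ≫ μ) ≫ μ := by
        rw [hS.a_nat, tH_comp_right]
        simp only [Category.assoc]

theorem tH_unit_unit_comp_mul (h : S.IsMonoidIn X μ η) (hS : S.IsSkewMonoidal) :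
    S.tH η η ≫ μ = S.l S.I ≫ η := by
  rw [← tH_right_comp_tH_left, Category.assoc, h.2.1, hS.l_nat]

theorem tH_rightAct_comp_mul (h : S.IsMonoidIn X μ η) (hS : S.IsSkewMonoidal) :
    S.tH (S.rightAct μ η) (𝟙 X) ≫ μ = S.a X S.I X ≫ S.tH (𝟙 X) (S.l X) ≫ μ := by
  rw [rightAct, h.tH_comp_mul_assoc hS, h.2.1]

theorem tH_mul_comp_rightAct (h : S.IsMonoidIn X μ η) (hS : S.IsSkewMonoidal) :
    S.tH μ (𝟙 S.I) ≫ S.rightAct μ η = S.a X X S.I ≫ S.tH (𝟙 X) (S.rightAct μ η) ≫ μ := by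
  have := h.tH_comp_mul_assoc hS (𝟙 X) η
  rwa [tH_id, Category.id_comp, ← tH_left_comp_tH_right, Category.assoc] at this

theorem tH_unit_comp_rightAct (h : S.IsMonoidIn X μ η) (hS : S.IsSkewMonoidal) :
    S.tH η (𝟙 S.I) ≫ S.rightAct μ η = S.l S.I ≫ η := by
  rw [rightAct, ← Category.assoc, tH_left_comp_tH_right, h.tH_unit_unit_comp_mul hS]

theorem rightAct_assoc (h : S.IsMonoidIn X μ η) (hS : S.IsSkewMonoidal) :
    S.tH (S.rightAct μ η) (𝟙 S.I) ≫ S.rightAct μ η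
      = S.a X S.I S.I ≫ S.tH (𝟙 X) (S.l S.I) ≫ S.rightAct μ η := by
  calc S.tH (S.rightAct μ η) (𝟙 S.I) ≫ S.rightAct μ η
      = S.tH (S.rightAct μ η) η ≫ μ := by
        rw [rightAct, ← Category.assoc (S.tH _ _), tH_left_comp_tH_right]
    _ = S.a X S.I S.I ≫ S.tH (𝟙 X) (S.l S.I) ≫ S.rightAct μ η := by
        rw [rightAct, h.tH_comp_mul_assoc hS, h.tH_unit_unit_comp_mul hS, tH_comp_right]
        simp only [Category.assoc]

abbrev toIMod (h : S.IsMonoidIn X μ η) (hS : S.IsSkewMonoidal) : IMod S where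
  X := X
  act := S.rightAct μ η
  massoc := h.rightAct_assoc hS
  munit := h.2.2

def unitHom (h : S.IsMonoidIn X μ η) (hS : S.IsSkewMonoidal) : unitMod S hS ⟶ h.toIMod hS where
  f := η
  comm := h.tH_unit_comp_rightAct hS

end IsMonoidIn

end SkewMonoidalData

namespace IMod

variable {C : Type u} [Category.{v} C] {S : SkewMonoidalData C} [S.Functorial]

open SkewMonoidalData

theorem act_eq_rightAct (hS : S.IsSkewMonoidal) (M : IMod S) {ν : S.t M.X M.X ⟶ M.X}
    {η : S.I ⟶ M.X}
    (hν : S.tH ν (𝟙 S.I) ≫ M.act = S.a M.X M.X S.I ≫ S.tH (𝟙 M.X) M.act ≫ ν)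
    (hη : S.tH η (𝟙 S.I) ≫ M.act = S.l S.I ≫ η) (hr : S.r M.X ≫ S.rightAct ν η = 𝟙 M.X) :
    M.act = S.rightAct ν η := by
  calc M.act
      = S.tH (S.r M.X ≫ S.tH (𝟙 M.X) η ≫ ν) (𝟙 S.I) ≫ M.act := by
        rw [← rightAct, hr, tH_id, Category.id_comp]
    _ = S.tH (S.r M.X) (𝟙 S.I) ≫ (S.tH (S.tH (𝟙 M.X) η) (𝟙 S.I) ≫ S.a M.X M.X S.I)
          ≫ S.tH (𝟙 M.X) M.act ≫ ν := by
        rw [tH_comp_left, tH_comp_left]; simp only [Category.assoc, hν]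
    _ = S.tH (S.r M.X) (𝟙 S.I) ≫ S.a M.X S.I S.I
          ≫ S.tH (𝟙 M.X) (S.tH η (𝟙 S.I) ≫ M.act) ≫ ν := by
        rw [hS.a_nat, tH_comp_right]; simp only [Category.assoc]
    _ = (S.tH (S.r M.X) (𝟙 S.I) ≫ S.a M.X S.I S.I ≫ S.tH (𝟙 M.X) (S.l S.I))
          ≫ S.tH (𝟙 M.X) η ≫ ν := by
        rw [hη, tH_comp_right]; simp only [Category.assoc]
    _ = S.rightAct ν η := by
        rw [hS.ax2, Category.id_comp, rightAct]

end IMod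

instance forgetIMod_faithful {C : Type u} [Category.{v} C] (S : SkewMonoidalData C)
    [S.Functorial] : (forgetIMod S).Faithful :=
  ⟨fun h => IModHom.ext h⟩

theorem CategoryTheory.epi_of_coequalizes {C : Type u} [Category.{v} C] {X Y W : C}
    {u v : X ⟶ Y} {q : Y ⟶ W} (hq : u ≫ q = v ≫ q)
    (huniv : ∀ {Z : C} (h : Y ⟶ Z), u ≫ h = v ≫ h → ∃! h' : W ⟶ Z, q ≫ h' = h) : Epi q := by
  refine ⟨fun f g hfg => ?_⟩
  obtain ⟨_, -, hu⟩ := huniv (q ≫ f) (by rw [← Category.assoc, hq, Category.assoc])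
  exact (hu f rfl).trans (hu g hfg.symm).symm

section Wedge

variable {C : Type u} [Category.{v} C] {S : SkewMonoidalData C} {M N : IMod S} {W : C}
  {q : S.t M.X N.X ⟶ W}

theorem IsWedge.epi (h : IsWedge S M N q) : Epi q :=
  epi_of_coequalizes h.1 h.2

theorem IsWedgeTens.epi (h : IsWedgeTens S M N q) (P : C) : Epi (S.tH q (𝟙 P)) :=
  epi_of_coequalizes (h P).1 (h P).2

end Wedge

/-- The right normalization `C^I`: `w M N` is the tensor `M ∧ N`, presented by the
coequalizer `q M N : M ⊗ N ⟶ M ∧ N`, and `tH'`, `a'`, `l'`, `r'` are the maps induced on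
the coequalizers by the structure of `C`. -/
structure RightNormalization {C : Type u} [Category.{v} C] (S : SkewMonoidalData C)
    [S.Functorial] (hS : S.IsSkewMonoidal) where
  w : IMod S → IMod S → IMod S
  q : ∀ M N : IMod S, S.t M.X N.X ⟶ (w M N).X
  tH' : ∀ (M M' N N' : IMod S), (M ⟶ M') → (N ⟶ N') → (w M N ⟶ w M' N')
  a' : ∀ M N P : IMod S, w (w M N) P ⟶ w M (w N P)
  l' : ∀ M : IMod S, w (unitMod S hS) M ⟶ M
  r' : ∀ M : IMod S, M ⟶ w M (unitMod S hS)
  isWedge : ∀ M N : IMod S, IsWedge S M N (q M N)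
  isWedgeTens : ∀ M N : IMod S, IsWedgeTens S M N (q M N)
  tH_q_comp_act : ∀ M N : IMod S,
    S.tH (q M N) (𝟙 S.I) ≫ (w M N).act = S.a M.X N.X S.I ≫ S.tH (𝟙 M.X) N.act ≫ q M N
  q_comp_tH' : ∀ (M M' N N' : IMod S) (φ : M ⟶ M') (ψ : N ⟶ N'),
    q M N ≫ (tH' M M' N N' φ ψ).f = S.tH φ.f ψ.f ≫ q M' N'
  q_comp_a' : ∀ M N P : IMod S,
    S.tH (q M N) (𝟙 P.X) ≫ q (w M N) P ≫ (a' M N P).f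
      = S.a M.X N.X P.X ≫ S.tH (𝟙 M.X) (q N P) ≫ q M (w N P)
  q_comp_l' : ∀ M : IMod S, q (unitMod S hS) M ≫ (l' M).f = S.l M.X
  r'_f : ∀ M : IMod S, (r' M).f = S.r M.X ≫ q M (unitMod S hS)

namespace RightNormalization

open SkewMonoidalData

variable {C : Type u} [Category.{v} C] {S : SkewMonoidalData C} [S.Functorial]
  {hS : S.IsSkewMonoidal} (R : RightNormalization S hS)

def skew : SkewMonoidalData (IMod S) :=
  SkewMonoidalData.mk R.w (fun {M M' N N'} φ ψ => R.tH' M M' N N' φ ψ) (unitMod S hS)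
    R.a' R.l' R.r'

instance epi_q (M N : IMod S) : Epi (R.q M N) :=
  (R.isWedge M N).epi

instance epi_tH_q (M N : IMod S) (P : C) : Epi (S.tH (R.q M N) (𝟙 P)) :=
  (R.isWedgeTens M N).epi P

def forgetLaxMonoidal : R.skew.LaxMonoidal S (forgetIMod S) where
  φ := R.q
  φ₀ := 𝟙 S.I
  φ_natural := R.q_comp_tH' _ _ _ _
  associativity := R.q_comp_a'
  left_unitality M := by
    change S.tH (𝟙 S.I) (𝟙 M.X) ≫ R.q (unitMod S hS) M ≫ (R.l' M).f = S.l M.X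
    rw [tH_id, Category.id_comp]
    exact R.q_comp_l' M
  right_unitality M := by
    change (R.r' M).f = S.r M.X ≫ S.tH (𝟙 M.X) (𝟙 S.I) ≫ R.q M (unitMod S hS)
    rw [tH_id, Category.id_comp]
    exact R.r'_f M

variable {m : IMod S} {μ : R.w m m ⟶ m} {η : unitMod S hS ⟶ m}

theorem isMonoidIn_forget (h : R.skew.IsMonoidIn m μ η) :
    S.IsMonoidIn m.X (R.q m m ≫ μ.f) η.f := by
  have h' : S.IsMonoidIn m.X (R.q m m ≫ μ.f) (𝟙 S.I ≫ η.f) :=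
    R.forgetLaxMonoidal.isMonoidIn_map μ η h
  rwa [Category.id_comp] at h'

theorem isMonoidIn_of_forget (h : S.IsMonoidIn m.X (R.q m m ≫ μ.f) η.f) :
    R.skew.IsMonoidIn m μ η := by
  have hφ₀ : Epi (S.tH (𝟙 S.I) (𝟙 m.X) ≫ R.q (unitMod S hS) m) := by
    rw [tH_id, Category.id_comp]; infer_instance
  rw [← Category.id_comp η.f] at h
  exact R.forgetLaxMonoidal.isMonoidIn_of_map μ η
    (hφ := epi_comp (S.tH (R.q m m) (𝟙 m.X)) (R.q (R.w m m) m)) (hφ₀ := hφ₀) h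

theorem tH_q_comp_comp_act {M N P : IMod S} (φ : R.w M N ⟶ P) :
    S.tH (R.q M N ≫ φ.f) (𝟙 S.I) ≫ P.act
      = S.a M.X N.X S.I ≫ S.tH (𝟙 M.X) N.act ≫ R.q M N ≫ φ.f := by
  rw [tH_comp_left, Category.assoc, φ.comm, ← Category.assoc, R.tH_q_comp_act]
  simp only [Category.assoc]

theorem act_eq_rightAct (h : R.skew.IsMonoidIn m μ η) :
    m.act = S.rightAct (R.q m m ≫ μ.f) η.f :=
  m.act_eq_rightAct hS (R.tH_q_comp_comp_act μ) η.comm (R.isMonoidIn_forget h).2.2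

theorem exists_lift_mul {X : C} {μ : S.t X X ⟶ X} {η : S.I ⟶ X} (h : S.IsMonoidIn X μ η) :
    ∃ μ' : R.w (h.toIMod hS) (h.toIMod hS) ⟶ h.toIMod hS, R.q _ _ ≫ μ'.f = μ := by
  have hcoeq : coeqPairL S (h.toIMod hS) (h.toIMod hS) ≫ μ
      = coeqPairR S (h.toIMod hS) (h.toIMod hS) ≫ μ := by
    rw [coeqPairL, coeqPairR, Category.assoc]
    exact h.tH_rightAct_comp_mul hS
  obtain ⟨μ', hμ', -⟩ := (R.isWedge (h.toIMod hS) (h.toIMod hS)).2 μ hcoeq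
  refine ⟨⟨μ', ?_⟩, hμ'⟩
  rw [← cancel_epi (S.tH (R.q _ _) (𝟙 S.I)), ← Category.assoc, ← tH_comp_left, hμ',
    ← Category.assoc, R.tH_q_comp_act, Category.assoc, Category.assoc, hμ']
  exact h.tH_mul_comp_rightAct hS

theorem existsUnique_lift_of_isMonoidIn {X : C} {μ : S.t X X ⟶ X} {η : S.I ⟶ X}
    (h : S.IsMonoidIn X μ η) :
    ∃! P : Σ' (m : IMod S) (_mu : R.w m m ⟶ m), unitMod S hS ⟶ m,
      R.skew.IsMonoidIn P.1 P.2.1 P.2.2 ∧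
      ∃ hX : P.1.X = X,
        eqToHom (show S.t X X = S.t P.1.X P.1.X by rw [hX])
            ≫ R.q P.1 P.1 ≫ P.2.1.f ≫ eqToHom hX = μ ∧
        P.2.2.f ≫ eqToHom hX = η := by
  obtain ⟨μ', hμ'⟩ := R.exists_lift_mul h
  refine ⟨⟨h.toIMod hS, μ', h.unitHom hS⟩, ⟨R.isMonoidIn_of_forget ?_, rfl, ?_, ?_⟩, ?_⟩
  · rw [hμ']
    exact h
  · change 𝟙 _ ≫ R.q _ _ ≫ μ'.f ≫ 𝟙 _ = μ
    simpa using hμ'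
  · exact Category.comp_id η
  · rintro ⟨⟨X', act', hassoc', hunit'⟩, μ₁, η₁⟩ ⟨hmon, hX, hμ₁, hη₁⟩
    dsimp only at hX
    subst X'
    simp only [eqToHom_refl, Category.id_comp, Category.comp_id] at hμ₁ hη₁
    have hact : act' = S.rightAct μ η := by
      rw [← hμ₁, ← hη₁]
      exact R.act_eq_rightAct hmon
    subst hact
    obtain rfl : μ₁ = μ' := IModHom.ext ((cancel_epi (R.q _ _)).1 (hμ₁.trans hμ'.symm))
    obtain rfl : η₁ = h.unitHom hS := IModHom.ext hη₁
    rfl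

theorem existsUnique_lift_hom {m n : IMod S} {μm : R.w m m ⟶ m} {ηm : unitMod S hS ⟶ m}
    {μn : R.w n n ⟶ n} {ηn : unitMod S hS ⟶ n} (hm : R.skew.IsMonoidIn m μm ηm)
    (hn : R.skew.IsMonoidIn n μn ηn) (g : m.X ⟶ n.X)
    (hμ : S.tH g g ≫ (R.q n n ≫ μn.f) = (R.q m m ≫ μm.f) ≫ g) (hη : ηm.f ≫ g = ηn.f) :
    ∃! g' : m ⟶ n, g'.f = g ∧ R.tH' m n m n g' g' ≫ μn = μm ≫ g' ∧ ηm ≫ g' = ηn := by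
  have comm : S.tH g (𝟙 S.I) ≫ n.act = m.act ≫ g := by
    rw [R.act_eq_rightAct hm, R.act_eq_rightAct hn]
    exact tH_comp_rightAct_of_hom g hμ hη
  refine ⟨⟨g, comm⟩, ⟨rfl, IModHom.ext ?_, IModHom.ext hη⟩, fun g' hg' => IModHom.ext hg'.1⟩
  rw [IMod.comp_f, IMod.comp_f, ← cancel_epi (R.q m m), ← Category.assoc, R.q_comp_tH',
    Category.assoc, hμ, Category.assoc]

end RightNormalization

/-- for a skew monoidal category `C` admitting its right normalization
`C^I`, the category of monoids in `C^I` is isomorphic to the category of monoids in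
`C` via the forgetful functor `U`: (a) `U` sends monoids to monoids; (b) every monoid
in `C` arises from a unique monoid in `C^I`; (c) monoid morphisms lift uniquely and
bijectively along `U`. -/
theorem monoids_in_normalization {C : Type u} [Category.{v} C]
    (S : SkewMonoidalData C) [S.Functorial] (hS : S.IsSkewMonoidal)
    (w : IMod S → IMod S → IMod S)
    (q : ∀ M N : IMod S, S.t M.X N.X ⟶ (w M N).X)
    (tH' : ∀ (M M' N N' : IMod S), (M ⟶ M') → (N ⟶ N') → (w M N ⟶ w M' N'))
    (a' : ∀ M N P : IMod S, w (w M N) P ⟶ w M (w N P))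
    (l' : ∀ M : IMod S, w (unitMod S hS) M ⟶ M)
    (r' : ∀ M : IMod S, M ⟶ w M (unitMod S hS))
    (hq : ∀ M N : IMod S, IsWedge S M N (q M N) ∧ IsWedgeTens S M N (q M N))
    (hlift : ∀ M N : IMod S,
      S.tH (q M N) (𝟙 S.I) ≫ (w M N).act
        = S.a M.X N.X S.I ≫ S.tH (𝟙 M.X) N.act ≫ q M N)
    (htH : ∀ (M M' N N' : IMod S) (φ : M ⟶ M') (ψ : N ⟶ N'),
      q M N ≫ (tH' M M' N N' φ ψ).f = S.tH φ.f ψ.f ≫ q M' N')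
    (ha : ∀ M N P : IMod S,
      S.tH (q M N) (𝟙 P.X) ≫ q (w M N) P ≫ (a' M N P).f
        = S.a M.X N.X P.X ≫ S.tH (𝟙 M.X) (q N P) ≫ q M (w N P))
    (hl : ∀ M : IMod S, q (unitMod S hS) M ≫ (l' M).f = S.l M.X)
    (hr : ∀ M : IMod S, (r' M).f = S.r M.X ≫ q M (unitMod S hS)) :
    letI Sprime := SkewMonoidalData.mk w (fun {M M' N N'} φ ψ => tH' M M' N N' φ ψ)
      (unitMod S hS) a' l' r'
    -- (a) the forgetful functor sends monoids in `C^I` to monoids in `C`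
    (∀ (m : IMod S) (mu : w m m ⟶ m) (e : unitMod S hS ⟶ m),
      Sprime.IsMonoidIn m mu e → S.IsMonoidIn m.X (q m m ≫ mu.f) e.f) ∧
    -- (b) every monoid in `C` arises from a unique monoid in `C^I`
    (∀ (X : C) (μ : S.t X X ⟶ X) (e : S.I ⟶ X), S.IsMonoidIn X μ e →
      ∃! P : Σ' (m : IMod S) (_mu : w m m ⟶ m), unitMod S hS ⟶ m,
        Sprime.IsMonoidIn P.1 P.2.1 P.2.2 ∧
        ∃ h : P.1.X = X,
          eqToHom (show S.t X X = S.t P.1.X P.1.X by rw [h])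
              ≫ q P.1 P.1 ≫ P.2.1.f ≫ eqToHom h = μ ∧
          P.2.2.f ≫ eqToHom h = e) ∧
    -- (c) monoid morphisms lift uniquely along the forgetful functor
    (∀ (m n : IMod S) (mum : w m m ⟶ m) (em : unitMod S hS ⟶ m)
        (mun : w n n ⟶ n) (en : unitMod S hS ⟶ n),
      Sprime.IsMonoidIn m mum em → Sprime.IsMonoidIn n mun en →
      ∀ g : m.X ⟶ n.X,
        S.tH g g ≫ (q n n ≫ mun.f) = (q m m ≫ mum.f) ≫ g → em.f ≫ g = en.f →
        ∃! gbar : m ⟶ n, gbar.f = g ∧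
          tH' m n m n gbar gbar ≫ mun = mum ≫ gbar ∧ em ≫ gbar = en) := by
  let R : RightNormalization S hS := ⟨w, q, tH', a', l', r', fun M N => (hq M N).1,
    fun M N => (hq M N).2, hlift, htH, ha, hl, hr⟩
  exact ⟨fun _ _ _ => R.isMonoidIn_forget, fun _ _ _ => R.existsUnique_lift_of_isMonoidIn,
    fun _ _ _ _ _ _ hm hn => R.existsUnique_lift_hom hm hn⟩
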